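/- Let x ∈ Lip(□^d, ℝ^n) have Lipschitz constant L (with respect to the Euclidean norms). Then the sum 1 + Σ_{m≥1} Σ_{(P,π) ∈ O_{d,n}^m × Σ_m^d} |Φ_m^{P,π}(x)|² is finite; more precisely it is at most Σ_{m≥0} binom(n,d)^m · L^{2dm} / (m!)^d, which is a convergent series. (Hence the mapping space signature Φ(x) = (Φ_m^{P,π}(x)) lies in the ℓ² space over the countable index set of all (m, P, π).) -/

import Mathlib

open MeasureTheory

open scoped Classical

noncomputable section

/-- The unit cube `[0,1]^d` as a subset of `Fin d → ℝ`. -/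
def unitCube (d : ℕ) : Set (Fin d → ℝ) := Set.Icc 0 1

/-- Lipschitz condition with constant `L`, with respect to Euclidean norms. -/
def EuclidLip {d n : ℕ} (L : ℝ) (x : (Fin d → ℝ) → Fin n → ℝ) : Prop :=
  ∀ s t : Fin d → ℝ,
    Real.sqrt (∑ k, (x s k - x t k) ^ 2) ≤ L * Real.sqrt (∑ j, (s j - t j) ^ 2)

/-- Lipschitz map. -/
def IsLipMap {d n : ℕ} (x : (Fin d → ℝ) → Fin n → ℝ) : Prop :=
  ∃ L : ℝ, EuclidLip L x

/-- The Jacobian minor `J[x_P](s)`: the determinant of the `d × d` matrix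
with `(i,j)` entry `∂ x_{P i} / ∂ s_j (s)`. -/
def jacobianMinor {d n : ℕ} (x : (Fin d → ℝ) → Fin n → ℝ) (P : Fin d → Fin n)
    (s : Fin d → ℝ) : ℝ :=
  (Matrix.of fun i j : Fin d => fderiv ℝ (fun t => x t (P i)) s (Pi.single j 1)).det

/-- The permuted `m`-simplex `Δ^m_π(a,b)`. -/
def permSimplex {m : ℕ} (π : Equiv.Perm (Fin m)) (a b : ℝ) : Set (Fin m → ℝ) :=
  {u | (∀ i, u i ∈ Set.Icc a b) ∧ StrictMono fun i => u (π i)}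

/-- The integration domain `D^{m,d}_π(a,b) = Δ^m_{π 1}(a₁,b₁) × ⋯ × Δ^m_{π d}(a_d,b_d)`. -/
def intDomain {m d : ℕ} (π : Fin d → Equiv.Perm (Fin m)) (a b : Fin d → ℝ) :
    Set (Fin m → Fin d → ℝ) :=
  {t | ∀ j, (fun i => t i j) ∈ permSimplex (π j) (a j) (b j)}

/-- The restricted mapping space monomial `Φ_m^{P,π}(x)_{a,b}`. -/
def msMonomialOn {d n m : ℕ} (x : (Fin d → ℝ) → Fin n → ℝ)
    (P : Fin m → Fin d → Fin n) (π : Fin d → Equiv.Perm (Fin m))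
    (a b : Fin d → ℝ) : ℝ :=
  ∫ t in intDomain π a b, ∏ i, jacobianMinor x (P i) (t i)

/-- The mapping space monomial `Φ_m^{P,π}(x)`. -/
def msMonomial {d n m : ℕ} (x : (Fin d → ℝ) → Fin n → ℝ)
    (P : Fin m → Fin d → Fin n) (π : Fin d → Equiv.Perm (Fin m)) : ℝ :=
  msMonomialOn x P π (fun _ => 0) (fun _ => 1)

/-- The level-`m` square sum `Σ_{(P,π)} |Φ_m^{P,π}(x)|²` over all level-`m` indices. -/
def levelSum (d n m : ℕ) (x : (Fin d → ℝ) → Fin n → ℝ) : ℝ :=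
  ∑ P ∈ Finset.univ.filter (fun P : Fin m → Fin d → Fin n => ∀ i, StrictMono (P i)),
    ∑ π : Fin d → Equiv.Perm (Fin m), (msMonomial x P π) ^ 2

/-!
Each Jacobian minor of an `L`-Lipschitz map is bounded by `L ^ d`: by Hadamard's inequality it is
at most the product of the Euclidean norms of `d` gradients of coordinates, and each of these is
at most `L`. After transposing coordinates, `D^{m,d}_π` is a product of `d` permuted simplices,
each of volume at most `1 / m!` because the `m!` permuted simplices are disjoint, have equal volume
and lie in the unit cube. Hence `|Φ_m^{P,π}(x)| ≤ L ^ (d m) / (m!) ^ d`, and as there are at most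
`binom(n,d) ^ m (m!) ^ d` indices of level `m`, the level-`m` sum is at most
`binom(n,d) ^ m L ^ (2 d m) / (m!) ^ d`, a series dominated by an exponential series.
-/

theorem Matrix.abs_det_le_prod_norm_rows {d : ℕ} (A : Matrix (Fin d) (Fin d) ℝ) :
    |A.det| ≤ ∏ i, ‖WithLp.toLp 2 (A i)‖ := by
  have : Fact (Module.finrank ℝ (EuclideanSpace ℝ (Fin d)) = d) := ⟨finrank_euclideanSpace_fin⟩
  let b := EuclideanSpace.basisFun (Fin d) ℝ
  have hdet : b.toBasis.det (fun i => WithLp.toLp 2 (A i)) = A.det := by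
    rw [Module.Basis.det_apply, ← Matrix.det_transpose]
    congr 1
  rw [← hdet, ← b.toBasis.orientation.volumeForm_robust' b]
  exact b.toBasis.orientation.abs_volumeForm_apply_le _

theorem norm_partialDerivs_le_of_lipschitzWith {d : ℕ} {f : (Fin d → ℝ) → ℝ} {K : NNReal}
    (hf : LipschitzWith K (f ∘ WithLp.ofLp : EuclideanSpace ℝ (Fin d) → ℝ)) (s : Fin d → ℝ) :
    ‖WithLp.toLp 2 (fun j => fderiv ℝ f s (Pi.single j 1))‖ ≤ K := by
  by_cases hdiff : DifferentiableAt ℝ f s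
  swap
  · simp only [fderiv_zero_of_not_differentiableAt hdiff, zero_apply]
    exact (norm_zero (E := EuclideanSpace ℝ (Fin d))).trans_le K.2
  set D := fderiv ℝ f s
  set g : EuclideanSpace ℝ (Fin d) := WithLp.toLp 2 (fun j => D (Pi.single j 1))
  obtain ⟨D', hD'e, hD'⟩ : ∃ D' : EuclideanSpace ℝ (Fin d) →L[ℝ] ℝ, D' g = D g.ofLp ∧ ‖D'‖ ≤ K :=
    ⟨_, rfl, (hdiff.hasFDerivAt.comp _
      (PiLp.continuousLinearEquiv 2 ℝ (fun _ : Fin d => ℝ)).hasFDerivAt).le_of_lipschitz hf⟩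
  have hDg : D g.ofLp = ‖g‖ ^ 2 := by
    conv_lhs => rw [← Finset.univ_sum_single g.ofLp, map_sum]
    rw [EuclideanSpace.real_norm_sq_eq]
    refine Finset.sum_congr rfl fun j _ => ?_
    conv_lhs => rw [← mul_one (g.ofLp j), ← smul_eq_mul, Pi.single_smul', map_smul, smul_eq_mul]
    rw [sq]
  have hg : ‖g‖ ^ 2 ≤ K * ‖g‖ :=
    calc ‖g‖ ^ 2 = D' g := by rw [hD'e, hDg]
      _ ≤ ‖D'‖ * ‖g‖ := (Real.le_norm_self _).trans (D'.le_opNorm g)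
      _ ≤ K * ‖g‖ := by gcongr
  nlinarith [norm_nonneg g, K.2]

theorem measurableSet_permSimplex {m : ℕ} (π : Equiv.Perm (Fin m)) (a b : ℝ) :
    MeasurableSet (permSimplex π a b) := by
  simp only [permSimplex, StrictMono, Set.ofPred_and, Set.ofPred_forall]
  measurability

theorem volume_permSimplex {m : ℕ} (π : Equiv.Perm (Fin m)) (a b : ℝ) :
    volume (permSimplex π a b) = volume (permSimplex (1 : Equiv.Perm (Fin m)) a b) := by
  have hpre : MeasurableEquiv.piCongrLeft (fun _ => ℝ) π.symm ⁻¹' permSimplex 1 a b =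
      permSimplex π a b := by
    ext u
    simp only [permSimplex, Set.mem_preimage, Set.mem_ofPred_eq, MeasurableEquiv.piCongrLeft,
      Equiv.piCongrLeft]
    simpa using fun _ => π.forall_congr_right (q := fun i => a ≤ u i ∧ u i ≤ b)
  rw [← hpre, (volume_measurePreserving_piCongrLeft (fun _ => ℝ) π.symm).measure_preimage
    (measurableSet_permSimplex 1 a b).nullMeasurableSet]

theorem pairwise_disjoint_permSimplex {m : ℕ} (a b : ℝ) :
    Pairwise (Function.onFun Disjoint fun π : Equiv.Perm (Fin m) => permSimplex π a b) := by
  intro σ τ hne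
  refine Set.disjoint_left.2 fun u ⟨_, hσ⟩ ⟨_, hτ⟩ => hne ?_
  -- `u ∘ σ` and `u ∘ τ` are both the increasing enumeration of the values of `u`
  have hcomp : u ∘ σ = u ∘ τ :=
    (hσ.range_inj hτ).1
      ((σ.surjective.range_comp u).trans (τ.surjective.range_comp u).symm)
  have hu : Function.Injective u := by
    simpa [Function.comp_def] using hσ.injective.comp σ.symm.injective
  exact Equiv.ext fun i => hu (congrFun hcomp i)

theorem volume_permSimplex_le {m : ℕ} (π : Equiv.Perm (Fin m)) :
    volume (permSimplex π 0 1) ≤ (m.factorial : ENNReal)⁻¹ := by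
  have hsum : ∑ σ : Equiv.Perm (Fin m), volume (permSimplex σ 0 1) ≤ 1 := by
    rw [← tsum_fintype (L := SummationFilter.unconditional _),
      ← measure_iUnion (pairwise_disjoint_permSimplex 0 1) (measurableSet_permSimplex · 0 1)]
    calc volume (⋃ σ, permSimplex σ 0 1)
        ≤ volume (Set.univ.pi fun _ : Fin m => Set.Icc (0 : ℝ) 1) :=
          measure_mono (Set.iUnion_subset fun σ u hu i _ => hu.1 i)
      _ = 1 := by rw [volume_pi_pi]; simp
  simp only [volume_permSimplex _ 0 1, Finset.sum_const, Finset.card_univ, Fintype.card_perm,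
    Fintype.card_fin, nsmul_eq_mul] at hsum
  rwa [ENNReal.le_inv_iff_mul_le, mul_comm, volume_permSimplex π]

theorem volume_measurePreserving_uncurry (ι κ X : Type*) [Fintype ι] [Fintype κ] [MeasureSpace X]
    [SigmaFinite (volume : Measure X)] :
    MeasurePreserving (MeasurableEquiv.curry ι κ X).symm volume volume := by
  refine ⟨(MeasurableEquiv.curry ι κ X).symm.measurable, (Measure.pi_eq fun s hs => ?_).symm⟩
  have hpre : (MeasurableEquiv.curry ι κ X).symm ⁻¹' Set.univ.pi s =
      Set.univ.pi fun i => Set.univ.pi fun k => s (i, k) := by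
    ext t
    simp [MeasurableEquiv.coe_curry_symm]
  rw [Measure.map_apply (MeasurableEquiv.curry ι κ X).symm.measurable (.univ_pi hs), hpre,
    volume_pi_pi]
  simp_rw [volume_pi_pi, Fintype.prod_prod_type]

theorem volume_measurePreserving_transpose (ι κ X : Type*) [Fintype ι] [Fintype κ] [MeasureSpace X]
    [SigmaFinite (volume : Measure X)] :
    MeasurePreserving (fun (t : ι → κ → X) k i => t i k) volume volume := by
  have h := (MeasurePreserving.symm _ (volume_measurePreserving_uncurry κ ι X)).comp
    ((volume_measurePreserving_piCongrLeft (fun _ => X) (Equiv.prodComm ι κ)).comp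
      (volume_measurePreserving_uncurry ι κ X))
  convert h using 1
  ext t k i
  simp [MeasurableEquiv.coe_curry_symm, MeasurableEquiv.piCongrLeft, Equiv.piCongrLeft]

theorem volume_intDomain {m d : ℕ} (π : Fin d → Equiv.Perm (Fin m)) (a b : Fin d → ℝ) :
    volume (intDomain π a b) = ∏ j, volume (permSimplex (π j) (a j) (b j)) := by
  have hpre : (fun (t : Fin m → Fin d → ℝ) j i => t i j) ⁻¹'
      Set.univ.pi (fun j => permSimplex (π j) (a j) (b j)) = intDomain π a b := by
    ext t
    simp [intDomain]
  rw [← hpre, (volume_measurePreserving_transpose _ _ ℝ).measure_preimage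
    (MeasurableSet.univ_pi fun j => measurableSet_permSimplex (π j) _ _).nullMeasurableSet,
    volume_pi_pi]

theorem volume_intDomain_le {m d : ℕ} (π : Fin d → Equiv.Perm (Fin m)) :
    volume (intDomain π (fun _ => 0) fun _ => 1) ≤ (m.factorial : ENNReal)⁻¹ ^ d := by
  rw [volume_intDomain]
  exact (Finset.prod_le_prod' fun j _ => volume_permSimplex_le (π j)).trans_eq (by simp)

theorem card_filter_strictMono_le (d n : ℕ) :
    (Finset.univ.filter fun f : Fin d → Fin n => StrictMono f).card ≤ n.choose d := by
  calc _ ≤ (Finset.univ.powersetCard d : Finset (Finset (Fin n))).card := by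
        refine Finset.card_le_card_of_injOn (fun f => Finset.univ.image f) (fun f hf => ?_)
          fun f hf g hg hfg => ?_
        · simp only [Finset.coe_filter_univ, Set.mem_ofPred_eq] at hf
          simp [Finset.mem_powersetCard, Finset.card_image_of_injective _ hf.injective]
        · simp only [Finset.coe_filter_univ, Set.mem_ofPred_eq] at hf hg
          refine (hf.range_inj hg).1 ?_
          simpa only [Finset.coe_image, Finset.coe_univ, Set.image_univ] using
            congrArg (fun s : Finset (Fin n) => (s : Set (Fin n))) hfg
    _ = n.choose d := by simp

theorem card_filter_forall_strictMono_le (m d n : ℕ) :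
    (Finset.univ.filter fun P : Fin m → Fin d → Fin n => ∀ i, StrictMono (P i)).card ≤
      n.choose d ^ m := by
  have : (Finset.univ.filter fun P : Fin m → Fin d → Fin n => ∀ i, StrictMono (P i)) =
      Fintype.piFinset fun _ => Finset.univ.filter fun f : Fin d → Fin n => StrictMono f := by
    ext P
    simp [Fintype.mem_piFinset]
  rw [this, Fintype.card_piFinset, Finset.prod_const, Finset.card_univ, Fintype.card_fin]
  exact Nat.pow_le_pow_left (card_filter_strictMono_le d n) m

theorem summable_pow_div_factorial_pow {d : ℕ} (hd : 1 ≤ d) (a : ℝ) :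
    Summable fun m => a ^ m / (m.factorial : ℝ) ^ d := by
  refine (Real.summable_pow_div_factorial |a|).of_norm_bounded fun m => ?_
  rw [Real.norm_eq_abs, abs_div, abs_pow, abs_pow, Nat.abs_cast]
  gcongr
  exact le_self_pow₀ (Nat.one_le_cast.2 m.factorial_pos) (Nat.one_le_iff_ne_zero.1 hd)

theorem levelSum_nonneg (d n m : ℕ) (x : (Fin d → ℝ) → Fin n → ℝ) :
    0 ≤ levelSum d n m x :=
  Finset.sum_nonneg fun _ _ => Finset.sum_nonneg fun _ _ => sq_nonneg _

namespace EuclidLip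

variable {d n : ℕ} {L : ℝ} {x : (Fin d → ℝ) → Fin n → ℝ}

theorem nonneg (hd : 1 ≤ d) (hx : EuclidLip L x) : 0 ≤ L := by
  have h := hx (Pi.single ⟨0, hd⟩ 1) 0
  simp only [Pi.zero_apply, sub_zero, Pi.single_apply, ite_pow, one_pow, zero_pow two_ne_zero,
    Finset.sum_ite_eq', Finset.mem_univ, if_true, Real.sqrt_one, mul_one] at h
  exact (Real.sqrt_nonneg _).trans h

theorem lipschitzWith_apply (hL : 0 ≤ L) (hx : EuclidLip L x) (k : Fin n) :
    LipschitzWith L.toNNReal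
      ((fun s => x s k) ∘ WithLp.ofLp : EuclideanSpace ℝ (Fin d) → ℝ) := by
  refine LipschitzWith.of_dist_le_mul fun u v => ?_
  rw [Real.dist_eq, Real.coe_toNNReal _ hL, EuclideanSpace.dist_eq]
  calc |x u.ofLp k - x v.ofLp k| ≤ √(∑ k', (x u.ofLp k' - x v.ofLp k') ^ 2) :=
        Real.abs_le_sqrt (Finset.single_le_sum (f := fun k' => (x u.ofLp k' - x v.ofLp k') ^ 2)
          (fun _ _ => sq_nonneg _) (Finset.mem_univ k))
    _ ≤ L * √(∑ j, (u.ofLp j - v.ofLp j) ^ 2) := hx _ _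
    _ = L * √(∑ j, dist (u j) (v j) ^ 2) := by simp [Real.dist_eq, sq_abs]

theorem abs_jacobianMinor_le (hL : 0 ≤ L) (hx : EuclidLip L x) (P : Fin d → Fin n) (s : Fin d → ℝ) :
    |jacobianMinor x P s| ≤ L ^ d :=
  calc |jacobianMinor x P s|
      ≤ ∏ i, ‖WithLp.toLp 2 (fun j => fderiv ℝ (fun t => x t (P i)) s (Pi.single j 1))‖ :=
        Matrix.abs_det_le_prod_norm_rows _
    _ ≤ ∏ _i : Fin d, L := Finset.prod_le_prod (fun _ _ => norm_nonneg _) fun i _ =>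
        (norm_partialDerivs_le_of_lipschitzWith (hx.lipschitzWith_apply hL (P i)) s).trans_eq
          (Real.coe_toNNReal _ hL)
    _ = L ^ d := by simp

theorem abs_msMonomial_le {m : ℕ} (hL : 0 ≤ L) (hx : EuclidLip L x)
    (P : Fin m → Fin d → Fin n) (π : Fin d → Equiv.Perm (Fin m)) :
    |msMonomial x P π| ≤ L ^ (d * m) / (m.factorial : ℝ) ^ d := by
  have hfin : volume (intDomain π (fun _ => 0) fun _ => 1) < ⊤ :=
    (volume_intDomain_le π).trans_lt (by simp [Nat.factorial_pos])
  have hvol : volume.real (intDomain π (fun _ => 0) fun _ => 1) ≤ ((m.factorial : ℝ)⁻¹) ^ d := by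
    simpa [measureReal_def] using
      ENNReal.toReal_mono (by simp [Nat.factorial_ne_zero]) (volume_intDomain_le π)
  have hbound : ∀ t ∈ intDomain π (fun _ => 0) (fun _ => 1),
      ‖∏ i, jacobianMinor x (P i) (t i)‖ ≤ L ^ (d * m) := by
    intro t _
    rw [Real.norm_eq_abs, Finset.abs_prod, pow_mul]
    exact (Finset.prod_le_prod (fun _ _ => abs_nonneg _) fun i _ =>
      hx.abs_jacobianMinor_le hL _ _).trans_eq (by simp)
  calc |msMonomial x P π| ≤ L ^ (d * m) * volume.real (intDomain π (fun _ => 0) fun _ => 1) :=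
        norm_setIntegral_le_of_norm_le_const hfin hbound
    _ ≤ L ^ (d * m) * ((m.factorial : ℝ)⁻¹) ^ d := by gcongr
    _ = L ^ (d * m) / (m.factorial : ℝ) ^ d := by rw [inv_pow, div_eq_mul_inv]

theorem levelSum_le (hL : 0 ≤ L) (hx : EuclidLip L x) (m : ℕ) :
    levelSum d n m x ≤ (n.choose d : ℝ) ^ m * L ^ (2 * d * m) / (m.factorial : ℝ) ^ d := by
  set S := Finset.univ.filter fun P : Fin m → Fin d → Fin n => ∀ i, StrictMono (P i)
  set B := L ^ (d * m) / (m.factorial : ℝ) ^ d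
  have hsq : ∀ P π, msMonomial x P π ^ 2 ≤ B ^ 2 := fun P π => by
    rw [← sq_abs]
    exact pow_le_pow_left₀ (abs_nonneg _) (hx.abs_msMonomial_le hL P π) 2
  have hS : (S.card : ℝ) ≤ (n.choose d : ℝ) ^ m := by
    exact_mod_cast card_filter_forall_strictMono_le m d n
  calc levelSum d n m x ≤ ∑ P ∈ S, ∑ _π : Fin d → Equiv.Perm (Fin m), B ^ 2 :=
        Finset.sum_le_sum fun P _ => Finset.sum_le_sum fun π _ => hsq P π
    _ = S.card * ((m.factorial : ℝ) ^ d * B ^ 2) := by simp [Fintype.card_perm]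
    _ ≤ (n.choose d : ℝ) ^ m * ((m.factorial : ℝ) ^ d * B ^ 2) := by gcongr
    _ = (n.choose d : ℝ) ^ m * L ^ (2 * d * m) / (m.factorial : ℝ) ^ d := by
        have : (m.factorial : ℝ) ≠ 0 := by positivity
        simp only [B]
        field_simp
        ring

end EuclidLip

theorem stmt6_general (d n : ℕ) (hd : 1 ≤ d) (L : ℝ)
    (x : (Fin d → ℝ) → Fin n → ℝ) (hx : EuclidLip L x) :
    Summable (fun m : ℕ => levelSum d n (m + 1) x) ∧
    Summable (fun m : ℕ =>
      (n.choose d : ℝ) ^ m * L ^ (2 * d * m) / (Nat.factorial m : ℝ) ^ d) ∧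
    1 + ∑' m : ℕ, levelSum d n (m + 1) x ≤
      ∑' m : ℕ, (n.choose d : ℝ) ^ m * L ^ (2 * d * m) / (Nat.factorial m : ℝ) ^ d := by
  set a : ℕ → ℝ := fun m => (n.choose d : ℝ) ^ m * L ^ (2 * d * m) / (m.factorial : ℝ) ^ d
  have hL := hx.nonneg hd
  have ha : Summable a := by
    simpa only [a, mul_pow, ← pow_mul] using
      summable_pow_div_factorial_pow hd ((n.choose d : ℝ) * L ^ (2 * d))
  have ha' : Summable fun m => a (m + 1) := (summable_nat_add_iff 1).2 ha
  have hle : ∀ m, levelSum d n (m + 1) x ≤ a (m + 1) := fun m => hx.levelSum_le hL (m + 1)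
  have hlevel : Summable fun m => levelSum d n (m + 1) x :=
    ha'.of_nonneg_of_le (fun m => levelSum_nonneg _ _ _ x) hle
  refine ⟨hlevel, ha, ?_⟩
  rw [ha.tsum_eq_zero_add]
  simpa [a] using hlevel.tsum_le_tsum hle ha'

/-- the squared Hilbert norm of the mapping space signature of an
`L`-Lipschitz map is finite, bounded by the convergent series
`Σ_m binom(n,d)^m L^{2dm}/(m!)^d`. -/
theorem stmt6 (d n : ℕ) (hd : 1 ≤ d) (hn : d ≤ n) (L : ℝ)
    (x : (Fin d → ℝ) → Fin n → ℝ) (hx : EuclidLip L x) :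
    Summable (fun m : ℕ => levelSum d n (m + 1) x) ∧
    Summable (fun m : ℕ =>
      (n.choose d : ℝ) ^ m * L ^ (2 * d * m) / (Nat.factorial m : ℝ) ^ d) ∧
    1 + ∑' m : ℕ, levelSum d n (m + 1) x ≤
      ∑' m : ℕ, (n.choose d : ℝ) ^ m * L ^ (2 * d * m) / (Nat.factorial m : ℝ) ^ d :=
  stmt6_general d n hd L x hx
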